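/- Lower bound on total work overload: under the recursion z_1 = 0, w_t = max(0, z_t + b_t − l), z_{t+1} = max(0, min(z_t + b_t, l) − c) for t = 1,...,n with l ≥ c > 0 and b_t ≥ 0, the total work overload satisfies ∑_{t=1}^n w_t ≥ (∑_{t=1}^n b_t) − n·c − (l − c). -/

import Mathlib

/-! The overload `w t` is exactly the part of `z t + b t` cut off by `min · l`, so each cycle
raises the start position by at least `b t - c - w t`. Telescoping, `∑ (b t - c - w t)` is at most
the final position `z (n + 1)`, which never exceeds `l - c`. -/

open Finset

lemma sub_max_zero_sub_eq_min {α : Type*} [AddCommGroup α] [LinearOrder α] [IsOrderedAddMonoid α]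
    (x l : α) : x - max 0 (x - l) = min x l := by
  rw [← min_sub_sub_left, sub_zero, sub_sub_cancel]

lemma sum_Icc_le_sub_of_le_sub {α : Type*} [AddCommGroup α] [PartialOrder α]
    [IsOrderedAddMonoid α] {f g : ℕ → α} {n : ℕ} (h : ∀ t ∈ Icc 1 n, f t ≤ g (t + 1) - g t) :
    ∑ t ∈ Icc 1 n, f t ≤ g (n + 1) - g 1 :=
  calc ∑ t ∈ Icc 1 n, f t ≤ ∑ t ∈ Icc 1 n, (g (t + 1) - g t) := sum_le_sum h
    _ = g (n + 1) - g 1 := by rw [← Ico_add_one_right_eq_Icc, sum_Ico_sub _ (by omega)]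

lemma sub_overload_sub_le_next_start (z b l c : ℝ) :
    z + b - max 0 (z + b - l) - c ≤ max 0 (min (z + b) l - c) := by
  rw [sub_max_zero_sub_eq_min]
  exact le_max_right _ _

lemma next_start_le_sub {x l c : ℝ} (hl : c ≤ l) : max 0 (min x l - c) ≤ l - c :=
  max_le (sub_nonneg.2 hl) (sub_le_sub_right (min_le_right x l) c)

theorem total_work_overload_lower_bound_general
    (n : ℕ) (c l : ℝ) (hl : c ≤ l)
    (z w b : ℕ → ℝ)
    (hz1 : z 1 = 0)
    (hw : ∀ t, 1 ≤ t → t ≤ n → w t = max 0 (z t + b t - l))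
    (hz : ∀ t, 1 ≤ t → t ≤ n → z (t + 1) = max 0 (min (z t + b t) l - c)) :
    (∑ t ∈ Finset.Icc 1 n, b t) - n * c - (l - c) ≤ ∑ t ∈ Finset.Icc 1 n, w t := by
  have hstep : ∀ t ∈ Icc 1 n, b t - c - w t ≤ z (t + 1) - z t := by
    intro t ht
    obtain ⟨h1, h2⟩ := mem_Icc.1 ht
    have := sub_overload_sub_le_next_start (z t) (b t) l c
    rw [hw t h1 h2, hz t h1 h2]
    linarith
  have hlast : z (n + 1) ≤ l - c := by
    rcases n.eq_zero_or_pos with rfl | hn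
    · simpa [hz1] using hl
    · rw [hz n hn le_rfl]
      exact next_start_le_sub hl
  have hsum := sum_Icc_le_sub_of_le_sub hstep
  rw [sum_sub_distrib, sum_sub_distrib, sum_const, Nat.card_Icc, nsmul_eq_mul] at hsum
  push_cast at hsum
  linarith

/-- Lower bound on total work overload: under the single-station dynamics
`z 1 = 0`, `w t = max 0 (z t + b t - l)`, `z (t+1) = max 0 (min (z t + b t) l - c)`
for `t = 1,…,n` with `l ≥ c > 0` and `b t ≥ 0`, the total work overload is at
least the total processing time minus the capacity `n·c` minus the slack `l - c`. -/
theorem total_work_overload_lower_bound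
    (n : ℕ) (c l : ℝ) (hc : 0 < c) (hl : c ≤ l)
    (z w b : ℕ → ℝ) (hb : ∀ t, 1 ≤ t → t ≤ n → 0 ≤ b t)
    (hz1 : z 1 = 0)
    (hw : ∀ t, 1 ≤ t → t ≤ n → w t = max 0 (z t + b t - l))
    (hz : ∀ t, 1 ≤ t → t ≤ n → z (t + 1) = max 0 (min (z t + b t) l - c)) :
    (∑ t ∈ Finset.Icc 1 n, b t) - n * c - (l - c) ≤ ∑ t ∈ Finset.Icc 1 n, w t :=
  total_work_overload_lower_bound_general n c l hl z w b hz1 hw hz
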